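/- For every integer n ≥ 2 and every integer k ≥ 0, the quantity (1 − 1/n)^k differs from e^{−k/n} by at most 1/(n−1); that is, |(1 − 1/n)^k − e^{−k/n}| ≤ 1/(n−1). -/

import Mathlib

/-- For `n ≥ 2` and `k ≥ 0`, the quantity `(1 − 1/n)^k` differs from `e^{−k/n}`
by at most `1/(n−1)`. -/
theorem pow_one_sub_inv_sub_exp_abs_le (n : ℕ) (hn : 2 ≤ n) (k : ℕ) :
    |(1 - 1 / (n : ℝ)) ^ k - Real.exp (-(k : ℝ) / n)| ≤ 1 / ((n : ℝ) - 1) := by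
  have hn2 : (2:ℝ) ≤ (n:ℝ) := by exact_mod_cast hn
  have hn0 : (0:ℝ) < n := by linarith
  set x : ℝ := 1 / n with hxdef
  have hx0 : 0 < x := by positivity
  have hxhalf : x ≤ 1/2 := by
    rw [hxdef, div_le_div_iff₀ hn0 (by norm_num)]
    linarith
  set b : ℝ := 1 - x with hbdef
  have hb0 : 0 < b := by rw [hbdef]; linarith
  have harg : -(k : ℝ) / n = -((k:ℝ) * x) := by rw [hxdef]; ring
  rw [harg]
  set t : ℝ := (k:ℝ) * x with htdef
  have ht0 : 0 ≤ t := by positivity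
  -- b^k ≤ exp(-t)
  have hble : b ≤ Real.exp (-x) := by
    have := Real.add_one_le_exp (-x); rw [hbdef]; linarith
  have hpow : b ^ k ≤ Real.exp (-t) := by
    calc b ^ k ≤ Real.exp (-x) ^ k := pow_le_pow_left₀ hb0.le hble k
    _ = Real.exp (-t) := by rw [← Real.exp_nat_mul, htdef]; ring_nf
  -- b^k = exp(k * log b)
  have hbk : b ^ k = Real.exp ((k:ℝ) * Real.log b) := by
    rw [Real.exp_nat_mul, Real.exp_log hb0]
  -- -log b ≤ x / b
  have hlog : -Real.log b ≤ x / b := by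
    have h1 := Real.log_le_sub_one_of_pos (show (0:ℝ) < 1/b by positivity)
    rw [one_div, Real.log_inv] at h1
    have h2 : (1:ℝ)/b - 1 = x / b := by
      field_simp [hbdef]
      linarith
    rw [one_div] at h2
    linarith
  -- t * exp(-t) ≤ 1
  have htexp : t * Real.exp (-t) ≤ 1 := by
    have h1 := Real.add_one_le_exp t
    have h2 : Real.exp (-t) * Real.exp t = 1 := by
      rw [← Real.exp_add]; simp
    nlinarith [Real.exp_pos (-t)]
  -- main bound
  have hmain : Real.exp (-t) - b ^ k ≤ x / b := by
    rw [hbk]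
    have hsplit : Real.exp (-t) - Real.exp ((k:ℝ) * Real.log b)
        = Real.exp (-t) * (1 - Real.exp ((k:ℝ) * Real.log b + t)) := by
      rw [mul_sub, mul_one, ← Real.exp_add]; ring_nf
    rw [hsplit]
    have h1 : 1 - Real.exp ((k:ℝ) * Real.log b + t) ≤ -((k:ℝ) * Real.log b + t) := by
      have := Real.add_one_le_exp ((k:ℝ) * Real.log b + t); linarith
    have hA : -((k:ℝ) * Real.log b + t) ≤ t * (x / b) := by
      have hk0 : (0:ℝ) ≤ (k:ℝ) := Nat.cast_nonneg k
      have hxb : x / b - x = x * (x / b) := by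
        field_simp [hbdef]; ring
      have h3 : (k:ℝ) * (-Real.log b) ≤ (k:ℝ) * (x / b) := by
        exact mul_le_mul_of_nonneg_left hlog hk0
      have h4 : t * (x / b) = (k:ℝ) * (x / b) - t := by
        rw [htdef]
        have : (k:ℝ) * x * (x/b) = (k:ℝ) * (x * (x/b)) := by ring
        rw [this, ← hxb]; ring
      rw [h4]; linarith
    calc Real.exp (-t) * (1 - Real.exp ((k:ℝ) * Real.log b + t))
        ≤ Real.exp (-t) * (t * (x / b)) := by
          apply mul_le_mul_of_nonneg_left _ (Real.exp_pos (-t)).le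
          linarith
      _ = (t * Real.exp (-t)) * (x / b) := by ring
      _ ≤ 1 * (x / b) := by
          apply mul_le_mul_of_nonneg_right htexp
          positivity
      _ = x / b := one_mul _
  have hxb1 : x / b = 1 / ((n:ℝ) - 1) := by
    rw [div_eq_div_iff hb0.ne' (by linarith : (n:ℝ) - 1 ≠ 0), hbdef, hxdef]
    field_simp
  rw [abs_sub_comm, abs_of_nonneg (by linarith)]
  linarith [hmain, hxb1.le]
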